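/- Let S = X₁ + ... + X_N be a compound Poisson random variable where N ~ Poisson(λ) and X_k are i.i.d. positive-integer-valued with p(i) = P(X₁ = i), independent of N. Then the probability mass function f(k) = P(S = k) satisfies Panjer's recursion: f(0) = e^{−λ} and f(k) = (λ/k) Σ_{i=1}^k i·p(i)·f(k−i) for k ≥ 1. -/

import Mathlib

/-!
With `P = ∑ pᵢ Xⁱ`, the sequence `q n` is the coefficient sequence of `Pⁿ`. Differentiating,
`X (P^(n+1))' = (n+1) (X P') Pⁿ`, which reads `k q_{n+1}(k) = (n+1) ∑ᵢ i pᵢ q_n(k-i)`.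
The Poisson weights `wₙ = λⁿ e^{-λ}/n!` satisfy `(n+1) w_{n+1} = λ wₙ`, so multiplying by
`w_{n+1}` and summing over `n` gives `k f(k) = λ ∑ᵢ i pᵢ f(k-i)`. Finally
`q n 0 = p 0 ^ n = 0 ^ n`, whence `f 0 = e^{-λ}`.
-/

open PowerSeries Finset

theorem Finset.sum_range_succ_eq_sum_Icc_of_map_zero {M : Type*} [AddCommMonoid M] (g : ℕ → M)
    (hg : g 0 = 0) (k : ℕ) : ∑ i ∈ range (k + 1), g i = ∑ i ∈ Icc 1 k, g i := by
  rw [range_eq_Ico, sum_eq_sum_Ico_succ_bot (Nat.succ_pos k), hg, zero_add, zero_add,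
    Nat.succ_eq_add_one, Ico_add_one_right_eq_Icc]

section FormalPowerSeries

variable {R : Type*} [CommSemiring R]

theorem PowerSeries.coeff_X_mul_derivative (φ : R⟦X⟧) (k : ℕ) :
    coeff k (X * d⁄dX R φ) = k * coeff k φ := by
  cases k with
  | zero => simp
  | succ k => rw [coeff_succ_X_mul, coeff_derivative, mul_comm]; push_cast; rfl

theorem PowerSeries.natCast_mul_coeff_pow_succ (φ : R⟦X⟧) (n k : ℕ) :
    (k : R) * coeff k (φ ^ (n + 1)) =
      (n + 1) * ∑ i ∈ range (k + 1), i * coeff i φ * coeff (k - i) (φ ^ n) := by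
  have h : X * d⁄dX R (φ ^ (n + 1)) = C ((n : R) + 1) * ((X * d⁄dX R φ) * φ ^ n) := by
    rw [derivative_pow, map_add, map_natCast, map_one, add_tsub_cancel_right]; push_cast; ring
  rw [← coeff_X_mul_derivative, h, coeff_C_mul, coeff_mul, Nat.sum_antidiagonal_eq_sum_range_succ
    (fun i j => coeff i (X * d⁄dX R φ) * coeff j (φ ^ n))]
  simp only [coeff_X_mul_derivative]

theorem PowerSeries.coeff_mk_pow {p : ℕ → R} {q : ℕ → ℕ → R}
    (hq0 : ∀ k, q 0 k = if k = 0 then 1 else 0)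
    (hqrec : ∀ n k, q (n + 1) k = ∑ i ∈ range (k + 1), q n i * p (k - i)) (n k : ℕ) :
    coeff k (mk p ^ n) = q n k := by
  induction n generalizing k with
  | zero => simp [hq0, coeff_one]
  | succ n ih =>
    rw [pow_succ, coeff_mul, Nat.sum_antidiagonal_eq_sum_range_succ
      (fun i j => coeff i (mk p ^ n) * coeff j (mk p)), hqrec]
    simp only [ih, coeff_mk]

section ConvolutionPower

variable {p : ℕ → R} {q : ℕ → ℕ → R}

theorem natCast_mul_convPow_succ (hq0 : ∀ k, q 0 k = if k = 0 then 1 else 0)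
    (hqrec : ∀ n k, q (n + 1) k = ∑ i ∈ range (k + 1), q n i * p (k - i)) (n k : ℕ) :
    (k : R) * q (n + 1) k = (n + 1) * ∑ i ∈ Icc 1 k, i * p i * q n (k - i) := by
  simp only [← coeff_mk_pow hq0 hqrec, natCast_mul_coeff_pow_succ, coeff_mk]
  rw [Finset.sum_range_succ_eq_sum_Icc_of_map_zero _ (by simp)]

theorem convPow_apply_zero (hq0 : ∀ k, q 0 k = if k = 0 then 1 else 0)
    (hqrec : ∀ n k, q (n + 1) k = ∑ i ∈ range (k + 1), q n i * p (k - i)) (n : ℕ) :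
    q n 0 = p 0 ^ n := by
  rw [← coeff_mk_pow hq0 hqrec, coeff_zero_eq_constantCoeff_apply, map_pow,
    ← coeff_zero_eq_constantCoeff_apply, coeff_mk]

end ConvolutionPower

end FormalPowerSeries

theorem natCast_succ_mul_pow_succ_mul_div_factorial {K : Type*} [Field K] [CharZero K]
    (x c : K) (n : ℕ) :
    (n + 1) * (x ^ (n + 1) * c / (n + 1).factorial) = x * (x ^ n * c / n.factorial) := by
  rw [Nat.factorial_succ, Nat.cast_mul]
  field_simp
  push_cast
  ring

theorem stmt_17_general (lam : ℝ)
    (p : ℕ → ℝ) (hp0 : p 0 = 0)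
    (q : ℕ → ℕ → ℝ)
    (hq0 : ∀ k, q 0 k = if k = 0 then 1 else 0)
    (hqrec : ∀ n k, q (n + 1) k = ∑ i ∈ Finset.range (k + 1), q n i * p (k - i))
    (f : ℕ → ℝ)
    (hf : ∀ k, HasSum (fun n : ℕ =>
      lam ^ n * Real.exp (-lam) / (Nat.factorial n : ℝ) * q n k) (f k)) :
    f 0 = Real.exp (-lam) ∧
      ∀ k : ℕ, 1 ≤ k →
        f k = (lam / k) * ∑ i ∈ Finset.Icc 1 k, (i : ℝ) * p i * f (k - i) := by
  refine ⟨(hf 0).unique ?_, fun k hk => ?_⟩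
  · convert hasSum_ite_eq 0 (Real.exp (-lam)) using 1
    ext n
    rcases n with _ | n <;> simp [convPow_apply_zero hq0 hqrec, hp0]
  · have hterm : ∀ n : ℕ,
        (k : ℝ) * (lam ^ (n + 1) * Real.exp (-lam) / (n + 1).factorial * q (n + 1) k) =
          lam * ∑ i ∈ Icc 1 k,
            i * p i * (lam ^ n * Real.exp (-lam) / n.factorial * q n (k - i)) := by
      intro n
      rw [mul_left_comm, natCast_mul_convPow_succ hq0 hqrec, ← mul_assoc,
        mul_comm _ ((n : ℝ) + 1), natCast_succ_mul_pow_succ_mul_div_factorial, mul_assoc, mul_sum]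
      simp only [mul_left_comm (_ / _ : ℝ)]
    have hshift := (hasSum_nat_add_iff' 1).mpr ((hf k).mul_left (k : ℝ))
    simp only [hterm, sum_range_one, hq0, if_neg (show k ≠ 0 by omega), mul_zero, sub_zero]
      at hshift
    have hkf := hshift.unique ((hasSum_sum fun i _ => (hf (k - i)).mul_left (i * p i)).mul_left lam)
    field_simp
    linarith [hkf]

/-- Panjer's recursion for a compound Poisson distribution: let `N ~ Poisson(λ)`, let
the claim sizes be i.i.d. positive-integer valued with p.m.f. `p`, and let
`q n` denote the `n`-fold convolution of `p` (the p.m.f. of `X₁ + ⋯ + X_n`), so that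
the compound p.m.f. is `f k = ∑_{n≥0} (λ^n e^{-λ}/n!) q n k`. Then `f 0 = e^{-λ}` and
`f k = (λ/k) ∑_{i=1}^k i · p i · f (k-i)` for all `k ≥ 1`. -/
theorem stmt_17 (lam : ℝ) (hlam : 0 < lam)
    (p : ℕ → ℝ) (hp0 : p 0 = 0) (hpnn : ∀ i, 0 ≤ p i) (hpsum : HasSum p 1)
    (q : ℕ → ℕ → ℝ)
    (hq0 : ∀ k, q 0 k = if k = 0 then 1 else 0)
    (hqrec : ∀ n k, q (n + 1) k = ∑ i ∈ Finset.range (k + 1), q n i * p (k - i))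
    (f : ℕ → ℝ)
    (hf : ∀ k, HasSum (fun n : ℕ =>
      lam ^ n * Real.exp (-lam) / (Nat.factorial n : ℝ) * q n k) (f k)) :
    f 0 = Real.exp (-lam) ∧
      ∀ k : ℕ, 1 ≤ k →
        f k = (lam / k) * ∑ i ∈ Finset.Icc 1 k, (i : ℝ) * p i * f (k - i) :=
  stmt_17_general lam p hp0 q hq0 hqrec f hf
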